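/- arXiv:1506.00190 — 4 statements merged into one kernel-verified Lean document; each statement's English description precedes it below -/
import Mathlib

section
/- Let G be a simple graph, let C be a cycle in G and let P be a path in G with V(C) ∩ V(P) = ∅. If there exists an edge (u, v) of C such that u is adjacent to the first vertex of P and v is adjacent to the last vertex of P, then G contains a cycle whose vertex set is exactly V(C) ∪ V(P). (Proposition 2 of the paper.) -/
/-!
Removing the edge `uv` from `C` leaves a path from `v` to `u` through all of `V(C)`. Going
`u → s`, along `P` to `t`, then `t → v` and back to `u` along that path closes a cycle: the two
paths are vertex-disjoint, and `us` is not an edge of the path `s → ⋯ → u` because `u ∉ V(P)`,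
`s ∉ V(C)` and `u ≠ v`.
-/

namespace SimpleGraph.Walk

variable {V : Type*} {G : SimpleGraph V}

lemma mem_support_tail_iff_of_not_nil {u w : V} {c : G.Walk u u} (hc : ¬c.Nil) :
    w ∈ c.tail.support ↔ w ∈ c.support := by
  rw [← c.cons_support_tail hc, List.mem_cons]
  exact ⟨Or.inr, by rintro (rfl | h); exacts [c.tail.end_mem_support, h]⟩

lemma IsCycle.penultimate_tail {u : V} {c : G.Walk u u} (hc : c.IsCycle) :
    c.tail.penultimate = c.penultimate := by
  cases c with
  | nil => rfl
  | cons h q =>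
    simpa [tail_cons] using (penultimate_cons_of_not_nil h q (not_nil_of_isCycle_cons hc)).symm

lemma IsCycle.eq_snd_or_eq_penultimate_of_mem_edges {u v : V} {c : G.Walk u u} (hc : c.IsCycle)
    (he : s(u, v) ∈ c.edges) : v = c.snd ∨ v = c.penultimate := by
  rw [← c.cons_tail_eq hc.not_nil, edges_cons, List.mem_cons, Sym2.congr_right] at he
  refine he.imp id fun he ↦ ?_
  rw [← hc.penultimate_tail]
  exact hc.isPath_tail.eq_penultimate_of_mem_edges (Sym2.eq_swap ▸ he)

lemma IsCycle.exists_isPath_of_mem_edges {a u v : V} {c : G.Walk a a} (hc : c.IsCycle)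
    (he : s(u, v) ∈ c.edges) :
    ∃ q : G.Walk v u, q.IsPath ∧ ∀ w, w ∈ q.support ↔ w ∈ c.support := by
  classical
  have hu := c.fst_mem_support_of_mem_edges he
  set c' := c.rotate u hu
  have hc' : c'.IsCycle := hc.rotate hu
  suffices ∃ q : G.Walk v u, q.IsPath ∧ ∀ w, w ∈ q.support ↔ w ∈ c'.support from
    this.imp fun _ ⟨hq, hqc⟩ ↦ ⟨hq, fun w ↦ (hqc w).trans (c.mem_support_rotate_iff u hu)⟩
  rcases hc'.eq_snd_or_eq_penultimate_of_mem_edges ((c.rotate_edges u hu).perm.mem_iff.mpr he)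
    with rfl | rfl
  · exact ⟨c'.tail, hc'.isPath_tail, fun _ ↦ mem_support_tail_iff_of_not_nil hc'.not_nil⟩
  · rw [← snd_reverse]
    refine ⟨c'.reverse.tail, hc'.reverse.isPath_tail, fun w ↦ ?_⟩
    rw [mem_support_tail_iff_of_not_nil hc'.reverse.not_nil, support_reverse, List.mem_reverse]

lemma isCycle_cons_append_cons {s t u v : V} {p : G.Walk s t} {q : G.Walk v u} (hp : p.IsPath)
    (hq : q.IsPath) (hdisj : ∀ w ∈ p.support, w ∉ q.support) (huv : u ≠ v) (hus : G.Adj u s)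
    (htv : G.Adj t v) : (cons hus (p.append (cons htv q))).IsCycle := by
  have hpath : (p.append (cons htv q)).IsPath := by
    rw [isPath_def, support_append, support_cons, List.tail_cons, List.nodup_append]
    exact ⟨hp.support_nodup, hq.support_nodup, fun x hx y hy hxy ↦ hdisj x hx (hxy ▸ hy)⟩
  refine (cons_isCycle_iff _ hus).mpr ⟨hpath, fun he ↦ ?_⟩
  rw [edges_append, edges_cons, List.mem_append, List.mem_cons, Sym2.eq_iff] at he
  rcases he with he | (⟨rfl, -⟩ | ⟨rfl, -⟩) | he
  · exact hdisj u (p.fst_mem_support_of_mem_edges he) q.end_mem_support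
  · exact hdisj u p.end_mem_support q.end_mem_support
  · exact huv rfl
  · exact hdisj s p.start_mem_support (q.snd_mem_support_of_mem_edges he)

end SimpleGraph.Walk

open SimpleGraph Walk

theorem cycle_path_merge_general {V : Type*} (G : SimpleGraph V)
    {a : V} (c : G.Walk a a) (hc : c.IsCycle)
    {s t : V} (p : G.Walk s t) (hp : p.IsPath)
    (hdisj : ∀ w, w ∈ c.support → w ∉ p.support)
    (u v : V) (huv : s(u, v) ∈ c.edges)
    (hus : G.Adj u s) (hvt : G.Adj v t) :
    ∃ (b : V) (c' : G.Walk b b), c'.IsCycle ∧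
      {w | w ∈ c'.support} = {w | w ∈ c.support} ∪ {w | w ∈ p.support} := by
  obtain ⟨q, hq, hqc⟩ := hc.exists_isPath_of_mem_edges huv
  have hpq : ∀ w ∈ p.support, w ∉ q.support := fun w hw hwq ↦ hdisj w ((hqc w).mp hwq) hw
  refine ⟨u, cons hus (p.append (cons hvt.symm q)),
    isCycle_cons_append_cons hp hq hpq (c.adj_of_mem_edges huv).ne hus hvt.symm, ?_⟩
  ext w
  simp only [Set.mem_ofPred_eq, Set.mem_union, support_cons, support_append, List.tail_cons,
    List.mem_cons, List.mem_append, ← hqc w]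
  exact ⟨by rintro (rfl | hw | hw); exacts [Or.inl q.end_mem_support, Or.inr hw, Or.inl hw],
    fun hw ↦ Or.inr hw.symm⟩

/-- Proposition 2: a cycle `C` and a vertex-disjoint path `P` such that some edge
`(u, v)` of `C` satisfies `u ~ start(P)` and `v ~ end(P)` can be concatenated
into a cycle on vertex set `V(C) ∪ V(P)`. -/
theorem cycle_path_merge {V : Type*} [Fintype V] (G : SimpleGraph V)
    {a : V} (c : G.Walk a a) (hc : c.IsCycle)
    {s t : V} (p : G.Walk s t) (hp : p.IsPath)
    (hdisj : ∀ w, w ∈ c.support → w ∉ p.support)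
    (u v : V) (huv : s(u, v) ∈ c.edges)
    (hus : G.Adj u s) (hvt : G.Adj v t) :
    ∃ (b : V) (c' : G.Walk b b), c'.IsCycle ∧
      {w | w ∈ c'.support} = {w | w ∈ c.support} ∪ {w | w ∈ p.support} :=
  cycle_path_merge_general G c hc p hp hdisj u v huv hus hvt
end

section
/- Let G be a simple graph and let C₁ and C₂ be two vertex-disjoint cycles of G. If there exist an edge (u₁, v₁) of C₁ and an edge (u₂, v₂) of C₂ such that u₁ is adjacent to u₂ and v₁ is adjacent to v₂, then G contains a cycle whose vertex set is exactly V(C₁) ∪ V(C₂). (Proposition 3 of the paper.) -/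
/-!
Deleting the edge `u₁v₁` from `C₁` leaves a path from `u₁` to `v₁` through all of `V(C₁)`, and
likewise for `C₂`. As the two paths are vertex-disjoint, the cross edges `u₁u₂` and `v₁v₂` close
them up into a single cycle.
-/

namespace SimpleGraph.Walk

variable {V : Type*} {G : SimpleGraph V}

lemma IsPath.append_cons_of_disjoint {u v w x : V} {p : G.Walk u v} {q : G.Walk w x}
    (hp : p.IsPath) (hq : q.IsPath) (h : G.Adj v w) (hpq : p.support.Disjoint q.support) :
    (p.append (cons h q)).IsPath := by
  rw [isPath_def, support_append, support_cons, List.tail_cons, List.nodup_append']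
  exact ⟨hp.support_nodup, hq.support_nodup, hpq⟩

lemma IsPath.isCycle_cons_append_cons {u₁ v₁ u₂ v₂ : V} {p₁ : G.Walk u₁ v₁} {p₂ : G.Walk u₂ v₂}
    (hp₁ : p₁.IsPath) (hp₂ : p₂.IsPath) (hne : ¬p₁.Nil) (hdisj : p₂.support.Disjoint p₁.support)
    (hu : G.Adj u₂ u₁) (hv : G.Adj v₁ v₂) :
    (cons hv (p₂.reverse.append (cons hu p₁))).IsCycle := by
  have hpath := hp₂.reverse.append_cons_of_disjoint hp₁ hu (by simpa using hdisj)
  have hlen : 0 < p₁.length := not_nil_iff_lt_length.mp hne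
  rw [isCycle_iff_isPath_tail_and_le_length]
  simp only [getVert_cons_succ, tail_cons, isPath_copy, length_cons, length_append,
    length_reverse]
  exact ⟨hpath, by omega⟩

lemma IsCycle.exists_isPath_support_iff {w u v : V} {c : G.Walk w w} (hc : c.IsCycle)
    (h : s(u, v) ∈ c.edges) :
    ∃ p : G.Walk u v, p.IsPath ∧ ∀ x, x ∈ p.support ↔ x ∈ c.support := by
  classical
  have hu : u ∈ c.support := c.fst_mem_support_of_mem_edges h
  have hadj : (c.rotate u hu).toSubgraph.Adj u v := by
    rw [toSubgraph_rotate, adj_toSubgraph_iff_mem_edges]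
    exact h
  -- a rotation of `c`, possibly reversed, that starts with the edge `uv`; its tail is the path
  obtain ⟨c', hc', rfl, hverts⟩ := (hc.rotate hu).exists_isCycle_snd_verts_eq hadj
  refine ⟨c'.tail.reverse, hc'.isPath_tail.reverse, fun x ↦ ?_⟩
  have hsupp : x ∈ c'.support ↔ x ∈ c.support := by
    rw [← mem_verts_toSubgraph, hverts, toSubgraph_rotate, mem_verts_toSubgraph]
  rw [← hsupp, support_reverse, List.mem_reverse, support_tail_of_not_nil _ hc'.not_nil,
    c'.mem_support_iff]
  exact ⟨Or.inr, by rintro (rfl | hx); exacts [end_mem_tail_support hc'.not_nil, hx]⟩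

end SimpleGraph.Walk

open SimpleGraph Walk

theorem cycle_cycle_merge_general {V : Type*} (G : SimpleGraph V)
    {a : V} (c₁ : G.Walk a a) (hc₁ : c₁.IsCycle)
    {b : V} (c₂ : G.Walk b b) (hc₂ : c₂.IsCycle)
    (hdisj : ∀ w, w ∈ c₁.support → w ∉ c₂.support)
    (u₁ v₁ u₂ v₂ : V)
    (h₁ : s(u₁, v₁) ∈ c₁.edges) (h₂ : s(u₂, v₂) ∈ c₂.edges)
    (huu : G.Adj u₁ u₂) (hvv : G.Adj v₁ v₂) :
    ∃ (d : V) (c' : G.Walk d d), c'.IsCycle ∧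
      {w | w ∈ c'.support} = {w | w ∈ c₁.support} ∪ {w | w ∈ c₂.support} := by
  obtain ⟨p₁, hp₁, hs₁⟩ := hc₁.exists_isPath_support_iff h₁
  obtain ⟨p₂, hp₂, hs₂⟩ := hc₂.exists_isPath_support_iff h₂
  simp only [← hs₁, ← hs₂] at hdisj ⊢
  have hne : ¬p₁.Nil := not_nil_of_ne (c₁.adj_of_mem_edges h₁).ne
  refine ⟨v₁, _, hp₁.isCycle_cons_append_cons hp₂ hne (fun w hw₂ hw₁ ↦ hdisj w hw₁ hw₂)
    huu.symm hvv, ?_⟩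
  ext w
  simp only [support_cons, support_append, support_reverse, List.tail_cons, Set.mem_ofPred_eq,
    Set.mem_union, List.mem_cons, List.mem_append, List.mem_reverse]
  grind [end_mem_support]

/-- Proposition 3: two vertex-disjoint cycles `C₁`, `C₂` with edges `(u₁, v₁) ∈ C₁`
and `(u₂, v₂) ∈ C₂` such that `u₁ ~ u₂` and `v₁ ~ v₂` can be concatenated into a
cycle on vertex set `V(C₁) ∪ V(C₂)`. -/
theorem cycle_cycle_merge {V : Type*} [Fintype V] (G : SimpleGraph V)
    {a : V} (c₁ : G.Walk a a) (hc₁ : c₁.IsCycle)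
    {b : V} (c₂ : G.Walk b b) (hc₂ : c₂.IsCycle)
    (hdisj : ∀ w, w ∈ c₁.support → w ∉ c₂.support)
    (u₁ v₁ u₂ v₂ : V)
    (h₁ : s(u₁, v₁) ∈ c₁.edges) (h₂ : s(u₂, v₂) ∈ c₂.edges)
    (huu : G.Adj u₁ u₂) (hvv : G.Adj v₁ v₂) :
    ∃ (d : V) (c' : G.Walk d d), c'.IsCycle ∧
      {w | w ∈ c'.support} = {w | w ∈ c₁.support} ∪ {w | w ∈ c₂.support} :=
  cycle_cycle_merge_general G c₁ hc₁ c₂ hc₂ hdisj u₁ v₁ u₂ v₂ h₁ h₂ huu hvv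
end

section
/- Every 2-connected, linear-convex supergrid graph is locally connected; that is, if G is a linear-convex supergrid graph on a finite vertex set V with |V| ≥ 3 that is connected and remains connected after deleting any single vertex, then for every vertex v of G the subgraph of G induced by the neighborhood N(v) is connected. (Theorem 1 of the paper.) -/
/-- The infinite supergrid graph `S∞` on `ℤ × ℤ`: distinct points are adjacent iff
their coordinates differ by at most 1 in each component. -/
def Supergrid : SimpleGraph (ℤ × ℤ) where
  Adj u v := u ≠ v ∧ |u.1 - v.1| ≤ 1 ∧ |u.2 - v.2| ≤ 1
  symm := by
    constructor
    rintro u v ⟨h1, h2, h3⟩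
    exact ⟨h1.symm, by rwa [abs_sub_comm], by rwa [abs_sub_comm]⟩
  loopless := by constructor; rintro u ⟨h, -⟩; exact h rfl

/-- A set `V ⊆ ℤ × ℤ` is linearly convex if along each of the four grid-line
directions, the set of parameters of points of `V` on any such line is an
interval of integers. -/
def LinearConvex (V : Set (ℤ × ℤ)) : Prop :=
  ∀ d ∈ ({(1, 0), (0, 1), (1, 1), (1, -1)} : Set (ℤ × ℤ)),
    ∀ p : ℤ × ℤ, ∀ t₁ t t₂ : ℤ, t₁ ≤ t → t ≤ t₂ →
      p + t₁ • d ∈ V → p + t₂ • d ∈ V → p + t • d ∈ V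

/-- A finite vertex set `V` (with `|V| ≥ 3`) induces a 2-connected supergrid graph
if the induced graph is connected and remains connected after deleting any single
vertex. -/
def TwoConnected (V : Finset (ℤ × ℤ)) : Prop :=
  3 ≤ V.card ∧
  (Supergrid.induce (V : Set (ℤ × ℤ))).Connected ∧
  ∀ v ∈ V, (Supergrid.induce ((V : Set (ℤ × ℤ)) \ {v})).Connected

/-!
Fix `v ∈ V` and call a function `f : ℤ × ℤ → ℤ` a gauge if it changes by at most one along
supergrid edges. If `v` is the only vertex of `V` on its level `f = f v`, then, `V \ {v}` being
connected, it cannot meet both sides of that level.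

If a diagonal neighbour `p = v + (s, t)` has neither `(p.1, v.2)` nor `(v.1, p.2)` in `V`, then
convexity empties the two rays from `v` through these points, which form the zero level of the
gauge `min (s (x - v.1)) (t (y - v.2))` of the quadrant of `p`; so all of `V \ {v}` lies in
the open quadrant and `p` is the only neighbour of `v`. Otherwise every diagonal neighbour is
adjacent to an orthogonal one. Two orthogonal neighbours are adjacent unless they are opposite,
say left and right of `v`; then the gauge `(x, y) ↦ x` shows that `v` is not alone in its
column, and a vertical neighbour of `v` joins them.
-/

open SimpleGraph

theorem SimpleGraph.Preconnected.lt_of_lt_of_forall_ne {α : Type*} {G : SimpleGraph α}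
    (hG : G.Preconnected) {f : α → ℤ} (hf : ∀ u w, G.Adj u w → f w ≤ f u + 1) {c : ℤ}
    (hc : ∀ x, f x ≠ c) {x y : α} (hx : f x < c) : f y < c := by
  obtain ⟨p⟩ := hG x y
  induction p with
  | nil => exact hx
  | cons huw _ ih => exact ih (lt_of_le_of_ne (by linarith [hf _ _ huw]) (hc _))

theorem SimpleGraph.Connected.induce_neighborSet_of_inter {α : Type*} {G : SimpleGraph α}
    {s : Set α} {v : s} (h : (G.induce (s ∩ G.neighborSet v)).Connected) :
    ((G.induce s).induce ((G.induce s).neighborSet v)).Connected :=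
  h.map ⟨fun x => ⟨⟨x.1, x.2.1⟩, x.2.2⟩, id⟩ fun x => ⟨⟨x.1.1, x.1.2, x.2⟩, rfl⟩

theorem Supergrid.adj_iff {u w : ℤ × ℤ} :
    Supergrid.Adj u w ↔ (u.1 ≠ w.1 ∨ u.2 ≠ w.2) ∧
      u.1 ≤ w.1 + 1 ∧ w.1 ≤ u.1 + 1 ∧ u.2 ≤ w.2 + 1 ∧ w.2 ≤ u.2 + 1 := by
  simp only [Supergrid, ne_eq, Prod.ext_iff, abs_le]
  omega

def OrthoConvex (V : Set (ℤ × ℤ)) : Prop :=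
  (∀ x y₁ y₂ y, (x, y₁) ∈ V → (x, y₂) ∈ V → y₁ ≤ y → y ≤ y₂ → (x, y) ∈ V) ∧
  ∀ x₁ x₂ x y, (x₁, y) ∈ V → (x₂, y) ∈ V → x₁ ≤ x → x ≤ x₂ → (x, y) ∈ V

theorem LinearConvex.orthoConvex {V : Set (ℤ × ℤ)} (h : LinearConvex V) : OrthoConvex V := by
  constructor
  · intro x y₁ y₂ y h₁ h₂ hy₁ hy₂
    simpa using
      h (0, 1) (by simp) (x, 0) y₁ y y₂ hy₁ hy₂ (by simpa using h₁) (by simpa using h₂)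
  · intro x₁ x₂ x y h₁ h₂ hx₁ hx₂
    simpa using
      h (1, 0) (by simp) (0, y) x₁ x x₂ hx₁ hx₂ (by simpa using h₁) (by simpa using h₂)

namespace OrthoConvex

variable {V : Set (ℤ × ℤ)} {u w : ℤ × ℤ}

theorem mem_of_fst_eq (hV : OrthoConvex V) (hu : u ∈ V) (hw : w ∈ V) (huw : u.1 = w.1)
    {y : ℤ} (hy : u.2 ≤ y ∧ y ≤ w.2 ∨ w.2 ≤ y ∧ y ≤ u.2) : (u.1, y) ∈ V := by
  rcases hy with ⟨h₁, h₂⟩ | ⟨h₁, h₂⟩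
  · exact hV.1 _ _ _ _ hu (huw ▸ hw) h₁ h₂
  · exact hV.1 _ _ _ _ (huw ▸ hw) hu h₁ h₂

theorem mem_of_snd_eq (hV : OrthoConvex V) (hu : u ∈ V) (hw : w ∈ V) (huw : u.2 = w.2)
    {x : ℤ} (hx : u.1 ≤ x ∧ x ≤ w.1 ∨ w.1 ≤ x ∧ x ≤ u.1) : (x, u.2) ∈ V := by
  rcases hx with ⟨h₁, h₂⟩ | ⟨h₁, h₂⟩
  · exact hV.2 _ _ _ _ hu (huw ▸ hw) h₁ h₂
  · exact hV.2 _ _ _ _ (huw ▸ hw) hu h₁ h₂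

end OrthoConvex

namespace Supergrid

variable {V : Set (ℤ × ℤ)} {v p q : ℤ × ℤ}

theorem apply_le_of_apply_lt (hconn : (Supergrid.induce (V \ {v})).Preconnected)
    {f : ℤ × ℤ → ℤ} (hf : ∀ u w, Supergrid.Adj u w → f w ≤ f u + 1)
    (hlevel : ∀ r ∈ V, f r = f v → r = v) (hp : p ∈ V) (hq : q ∈ V) (hpv : f p < f v) :
    f q ≤ f v := by
  by_contra! hqv
  have hne : ∀ r : ↥(V \ {v}), f r ≠ f v := fun r hr => r.2.2 (hlevel r r.2.1 hr)
  have := hconn.lt_of_lt_of_forall_ne (f := f ∘ Subtype.val) (fun _ _ h => hf _ _ h) hne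
    (x := ⟨p, hp, fun h => by rw [h] at hpv; exact lt_irrefl _ hpv⟩)
    (y := ⟨q, hq, fun h => by rw [h] at hqv; exact lt_irrefl _ hqv⟩) hpv
  exact lt_asymm hqv this

theorem mem_above_or_below (hV : OrthoConvex V)
    (hconn : (Supergrid.induce (V \ {v})).Preconnected) (hv : v ∈ V) (hp : p ∈ V) (hq : q ∈ V)
    (hpv : p.1 < v.1) (hvq : v.1 < q.1) : (v.1, v.2 + 1) ∈ V ∨ (v.1, v.2 - 1) ∈ V := by
  by_contra! hcol
  have hlevel : ∀ r ∈ V, r.1 = v.1 → r = v := by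
    intro r hr hrv
    by_contra hne
    rcases lt_or_gt_of_ne fun h => hne (Prod.ext hrv h) with hlt | hgt
    · exact hcol.2 (hV.mem_of_fst_eq hv hr hrv.symm (by omega))
    · exact hcol.1 (hV.mem_of_fst_eq hv hr hrv.symm (by omega))
  have := apply_le_of_apply_lt hconn (f := Prod.fst)
    (fun _ _ h => by simp only [adj_iff] at h; omega) hlevel hp hq hpv
  omega

theorem mem_left_or_right (hV : OrthoConvex V)
    (hconn : (Supergrid.induce (V \ {v})).Preconnected) (hv : v ∈ V) (hp : p ∈ V) (hq : q ∈ V)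
    (hpv : p.2 < v.2) (hvq : v.2 < q.2) : (v.1 + 1, v.2) ∈ V ∨ (v.1 - 1, v.2) ∈ V := by
  by_contra! hrow
  have hlevel : ∀ r ∈ V, r.2 = v.2 → r = v := by
    intro r hr hrv
    by_contra hne
    rcases lt_or_gt_of_ne fun h => hne (Prod.ext h hrv) with hlt | hgt
    · exact hrow.2 (hV.mem_of_snd_eq hv hr hrv.symm (by omega))
    · exact hrow.1 (hV.mem_of_snd_eq hv hr hrv.symm (by omega))
  have := apply_le_of_apply_lt hconn (f := Prod.snd)
    (fun _ _ h => by simp only [adj_iff] at h; omega) hlevel hp hq hpv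
  omega

theorem eq_of_adj_of_corner (hV : OrthoConvex V)
    (hconn : (Supergrid.induce (V \ {v})).Preconnected) (hv : v ∈ V) (hp : p ∈ V)
    (hvp : Supergrid.Adj v p) (hpx : (p.1, v.2) ∉ V) (hpy : (v.1, p.2) ∉ V) (hq : q ∈ V)
    (hvq : Supergrid.Adj v q) : q = p := by
  obtain ⟨x, y⟩ := p
  obtain ⟨s, rfl⟩ : ∃ s, x = v.1 + s := ⟨x - v.1, by ring⟩
  obtain ⟨t, rfl⟩ : ∃ t, y = v.2 + t := ⟨y - v.2, by ring⟩
  dsimp only at hpx hpy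
  have hs : s = 1 ∨ s = -1 := by
    have : s ≠ 0 := by rintro rfl; rw [add_zero] at hp; exact hpy hp
    simp only [adj_iff] at hvp; omega
  have ht : t = 1 ∨ t = -1 := by
    have : t ≠ 0 := by rintro rfl; rw [add_zero] at hp; exact hpx hp
    simp only [adj_iff] at hvp; omega
  set f : ℤ × ℤ → ℤ := fun r => min (s * (r.1 - v.1)) (t * (r.2 - v.2)) with hf
  have hlevel : ∀ r ∈ V, -f r = -f v → r = v := by
    intro r hr hfr
    have : (r.1 = v.1 ∧ (v.2 ≤ v.2 + t ∧ v.2 + t ≤ r.2 ∨ r.2 ≤ v.2 + t ∧ v.2 + t ≤ v.2)) ∨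
        (r.2 = v.2 ∧ (v.1 ≤ v.1 + s ∧ v.1 + s ≤ r.1 ∨ r.1 ≤ v.1 + s ∧ v.1 + s ≤ v.1)) ∨
        (r.1 = v.1 ∧ r.2 = v.2) := by
      simp only [hf] at hfr
      rcases hs with rfl | rfl <;> rcases ht with rfl | rfl <;> omega
    rcases this with ⟨h₁, h₂⟩ | ⟨h₁, h₂⟩ | ⟨h₁, h₂⟩
    · exact absurd (hV.mem_of_fst_eq hv hr h₁.symm h₂) hpy
    · exact absurd (hV.mem_of_snd_eq hv hr h₁.symm h₂) hpx
    · exact Prod.ext h₁ h₂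
  have hgauge : ∀ u w, Supergrid.Adj u w → -f w ≤ -f u + 1 := by
    intro u w h
    simp only [adj_iff, hf] at h ⊢
    rcases hs with rfl | rfl <;> rcases ht with rfl | rfl <;> omega
  have hfp : -f (v.1 + s, v.2 + t) < -f v := by
    simp only [hf]
    rcases hs with rfl | rfl <;> rcases ht with rfl | rfl <;> omega
  have hfq := apply_le_of_apply_lt hconn hgauge hlevel hp hq hfp
  have hfq' : -f q ≠ -f v := fun h => hvq.ne' (hlevel q hq h)
  simp only [hf, adj_iff] at hfq hfq' hvq
  rcases hs with rfl | rfl <;> rcases ht with rfl | rfl <;> exact Prod.ext (by omega) (by omega)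

theorem reachable_of_orthogonal (hV : OrthoConvex V)
    (hconn : (Supergrid.induce (V \ {v})).Preconnected) (hv : v ∈ V)
    (x y : ↥(V ∩ Supergrid.neighborSet v)) (hx : x.1.1 = v.1 ∨ x.1.2 = v.2)
    (hy : y.1.1 = v.1 ∨ y.1.2 = v.2) :
    (Supergrid.induce (V ∩ Supergrid.neighborSet v)).Reachable x y := by
  have via : ∀ m ∈ V, Supergrid.Adj v m → Supergrid.Adj x.1 m → Supergrid.Adj m y.1 →
      (Supergrid.induce (V ∩ Supergrid.neighborSet v)).Reachable x y :=
    fun m hm hvm hxm hmy =>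
      (Adj.reachable (G := Supergrid.induce (V ∩ Supergrid.neighborSet v))
        (v := ⟨m, hm, hvm⟩) hxm).trans (Adj.reachable (G := Supergrid.induce _) hmy)
  by_cases hxy : x = y
  · exact hxy ▸ Reachable.refl _
  by_cases hadj : Supergrid.Adj x.1 y.1
  · exact Adj.reachable (G := Supergrid.induce _) hadj
  have hvx : Supergrid.Adj v x.1 := x.2.2
  have hvy : Supergrid.Adj v y.1 := y.2.2
  have hxy' : ¬(x.1.1 = y.1.1 ∧ x.1.2 = y.1.2) := fun h => hxy (Subtype.ext (Prod.ext h.1 h.2))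
  simp only [adj_iff] at hadj hvx hvy
  rcases (by omega : (x.1.2 = v.2 ∧ y.1.2 = v.2) ∨ (x.1.1 = v.1 ∧ y.1.1 = v.1)) with
    ⟨hx₂, hy₂⟩ | ⟨hx₁, hy₁⟩
  · have hmid : (v.1, v.2 + 1) ∈ V ∨ (v.1, v.2 - 1) ∈ V := by
      rcases lt_or_gt_of_ne (by omega : x.1.1 ≠ v.1) with h | h
      · exact mem_above_or_below hV hconn hv x.2.1 y.2.1 h (by omega)
      · exact mem_above_or_below hV hconn hv y.2.1 x.2.1 (by omega) h
    rcases hmid with hm | hm <;>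
      exact via _ hm (by simp only [adj_iff]; omega) (by simp only [adj_iff]; omega)
        (by simp only [adj_iff]; omega)
  · have hmid : (v.1 + 1, v.2) ∈ V ∨ (v.1 - 1, v.2) ∈ V := by
      rcases lt_or_gt_of_ne (by omega : x.1.2 ≠ v.2) with h | h
      · exact mem_left_or_right hV hconn hv x.2.1 y.2.1 h (by omega)
      · exact mem_left_or_right hV hconn hv y.2.1 x.2.1 (by omega) h
    rcases hmid with hm | hm <;>
      exact via _ hm (by simp only [adj_iff]; omega) (by simp only [adj_iff]; omega)
        (by simp only [adj_iff]; omega)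

theorem exists_orthogonal_reachable
    (hcorner : ∀ p ∈ V, Supergrid.Adj v p → (p.1, v.2) ∈ V ∨ (v.1, p.2) ∈ V)
    (x : ↥(V ∩ Supergrid.neighborSet v)) :
    ∃ o : ↥(V ∩ Supergrid.neighborSet v), (o.1.1 = v.1 ∨ o.1.2 = v.2) ∧
      (Supergrid.induce (V ∩ Supergrid.neighborSet v)).Reachable x o := by
  by_cases hx : x.1.1 = v.1 ∨ x.1.2 = v.2
  · exact ⟨x, hx, Reachable.refl _⟩
  have hvx : Supergrid.Adj v x.1 := x.2.2
  simp only [adj_iff] at hvx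
  rcases hcorner x.1 x.2.1 x.2.2 with hm | hm
  · exact ⟨⟨_, hm, by simp only [mem_neighborSet, adj_iff]; omega⟩, Or.inr rfl,
      Adj.reachable (by simp only [induce_adj, adj_iff]; omega)⟩
  · exact ⟨⟨_, hm, by simp only [mem_neighborSet, adj_iff]; omega⟩, Or.inl rfl,
      Adj.reachable (by simp only [induce_adj, adj_iff]; omega)⟩

theorem connected_induce_inter_neighborSet (hV : OrthoConvex V)
    (hconn : (Supergrid.induce (V \ {v})).Preconnected) (hv : v ∈ V)
    (hN : (V ∩ Supergrid.neighborSet v).Nonempty) :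
    (Supergrid.induce (V ∩ Supergrid.neighborSet v)).Connected := by
  have := hN.to_subtype
  refine ⟨fun x y => ?_⟩
  by_cases hcorner : ∃ p ∈ V, Supergrid.Adj v p ∧ (p.1, v.2) ∉ V ∧ (v.1, p.2) ∉ V
  · obtain ⟨p, hp, hvp, hpx, hpy⟩ := hcorner
    have hx := eq_of_adj_of_corner hV hconn hv hp hvp hpx hpy x.2.1 x.2.2
    have hy := eq_of_adj_of_corner hV hconn hv hp hvp hpx hpy y.2.1 y.2.2
    rw [Subtype.ext (hx.trans hy.symm)]
  replace hcorner : ∀ p ∈ V, Supergrid.Adj v p → (p.1, v.2) ∈ V ∨ (v.1, p.2) ∈ V := by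
    simpa only [not_exists, not_and, not_not, or_iff_not_imp_left] using hcorner
  obtain ⟨ox, hox, hxo⟩ := exists_orthogonal_reachable hcorner x
  obtain ⟨oy, hoy, hyo⟩ := exists_orthogonal_reachable hcorner y
  exact hxo.trans ((reachable_of_orthogonal hV hconn hv ox oy hox hoy).trans hyo.symm)

end Supergrid

/-- Theorem 1: every 2-connected, linear-convex supergrid graph is locally
connected: the subgraph induced by the neighborhood of each vertex is connected. -/
theorem linearConvex_twoConnected_locallyConnected (V : Finset (ℤ × ℤ))
    (hlc : LinearConvex (V : Set (ℤ × ℤ))) (h2c : TwoConnected V) :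
    ∀ v : (V : Set (ℤ × ℤ)),
      ((Supergrid.induce (V : Set (ℤ × ℤ))).induce
        ((Supergrid.induce (V : Set (ℤ × ℤ))).neighborSet v)).Connected := by
  obtain ⟨hcard, hconn, hdel⟩ := h2c
  intro v
  have : Nontrivial (V : Set (ℤ × ℤ)) :=
    (Finset.one_lt_card_iff_nontrivial.mp (by omega)).coe_sort
  obtain ⟨u, hvu⟩ := hconn.preconnected.exists_adj_of_nontrivial v
  exact Connected.induce_neighborSet_of_inter <|
    Supergrid.connected_induce_inter_neighborSet hlc.orthoConvex (hdel v v.2).preconnected v.2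
      ⟨u, u.2, hvu⟩
end

section
/- In a 2-connected, linear-convex supergrid graph G, every vertex u has two neighbors v and w that are adjacent to each other; in particular every vertex of G lies on a triangle. (Proved in the paper as the key step deriving Corollary 1 from Theorem 1.) -/
theorem SimpleGraph.Walk.exists_mem_support_eq {α : Type*} {G : SimpleGraph α} (f : α → ℤ)
    (hf : ∀ a b, G.Adj a b → f b ≤ f a + 1) {a b : α} (p : G.Walk a b) {c : ℤ}
    (hac : f a ≤ c) (hcb : c ≤ f b) : ∃ x ∈ p.support, f x = c := by
  induction p with
  | nil => exact ⟨_, Walk.start_mem_support _, le_antisymm hac hcb⟩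
  | @cons a a' b hadj p ih =>
    rcases hac.eq_or_lt with hac | hac
    · exact ⟨a, Walk.start_mem_support _, hac⟩
    · obtain ⟨x, hx, rfl⟩ := ih (by linarith [hf a a' hadj]) hcb
      exact ⟨x, List.mem_cons_of_mem _ hx, rfl⟩

theorem SimpleGraph.exists_adj_of_preconnected_induce {α : Type*} {G : SimpleGraph α} {s : Set α}
    (h : (G.induce s).Preconnected) (hs : s.Nontrivial) {u : α} (hu : u ∈ s) :
    ∃ v ∈ s, G.Adj u v := by
  have := hs.coe_sort
  obtain ⟨v, huv⟩ := h.exists_adj_of_nontrivial ⟨u, hu⟩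
  exact ⟨v, v.2, huv⟩

theorem LinearConvex.ordConnected_row {S : Set (ℤ × ℤ)} (h : LinearConvex S) (b : ℤ) :
    ((·, b) ⁻¹' S).OrdConnected :=
  ⟨fun x hx y hy t ht => by
    simpa using h (1, 0) (by simp) (0, b) x t y ht.1 ht.2 (by simpa using hx) (by simpa using hy)⟩

theorem LinearConvex.ordConnected_column {S : Set (ℤ × ℤ)} (h : LinearConvex S) (a : ℤ) :
    (Prod.mk a ⁻¹' S).OrdConnected :=
  ⟨fun x hx y hy t ht => by
    simpa using h (0, 1) (by simp) (a, 0) x t y ht.1 ht.2 (by simpa using hx) (by simpa using hy)⟩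

namespace Supergrid

variable {S : Set (ℤ × ℤ)} {u v w : ℤ × ℤ}

theorem adj_iff_s7 : Supergrid.Adj u v ↔ (u.1 ≠ v.1 ∨ u.2 ≠ v.2) ∧
    -1 ≤ u.1 - v.1 ∧ u.1 - v.1 ≤ 1 ∧ -1 ≤ u.2 - v.2 ∧ u.2 - v.2 ≤ 1 := by
  simp only [Supergrid, ne_eq, Prod.ext_iff, not_and_or, abs_le, and_assoc]

theorem adj_swap : Supergrid.Adj u.swap v.swap ↔ Supergrid.Adj u v := by
  simp only [adj_iff_s7, Prod.fst_swap, Prod.snd_swap]; omega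

theorem fst_le_fst_add_one (h : Supergrid.Adj u v) : v.1 ≤ u.1 + 1 := by
  rw [adj_iff_s7] at h; omega

theorem snd_le_snd_add_one (h : Supergrid.Adj u v) : v.2 ≤ u.2 + 1 := by
  rw [adj_iff_s7] at h; omega

def NoTriangleAt (S : Set (ℤ × ℤ)) (u : ℤ × ℤ) : Prop :=
  ∀ a ∈ S, ∀ b ∈ S, Supergrid.Adj u a → Supergrid.Adj u b → ¬ Supergrid.Adj a b

theorem NoTriangleAt.swap (h : NoTriangleAt S u) :
    NoTriangleAt (Prod.swap ⁻¹' S) u.swap := fun a ha b hb hua hub hab =>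
  h a.swap ha b.swap hb (adj_swap.2 hua) (adj_swap.2 hub) (adj_swap.2 hab)

theorem exists_mem_ne_eq_of_preconnected (f : ℤ × ℤ → ℤ)
    (hf : ∀ a b, Supergrid.Adj a b → f b ≤ f a + 1)
    (hS : (Supergrid.induce (S \ {u})).Preconnected) (hv : v ∈ S \ {u}) (hw : w ∈ S \ {u})
    (hvu : f v ≤ f u) (huw : f u ≤ f w) : ∃ x ∈ S, x ≠ u ∧ f x = f u := by
  obtain ⟨p⟩ := hS ⟨v, hv⟩ ⟨w, hw⟩
  obtain ⟨x, -, hx⟩ := p.exists_mem_support_eq (f ∘ Subtype.val) (fun _ _ h => hf _ _ h) hvu huw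
  exact ⟨x, x.2.1, x.2.2, hx⟩

theorem notMem_of_adj_of_fst_eq (hrow : ∀ b, ((·, b) ⁻¹' S).OrdConnected)
    (htri : NoTriangleAt S u) (hv : v ∈ S) (hw : w ∈ S) (huv : Supergrid.Adj u v)
    (huw : Supergrid.Adj u w) (hvw : v.1 + 2 = w.1) {y : ℤ × ℤ} (huy : Supergrid.Adj u y)
    (hyu : y.1 = u.1) : y ∉ S := by
  intro hy
  have hv2 : v.2 + y.2 = 2 * u.2 := by
    by_contra h
    exact htri v hv y hy huv huy (by rw [adj_iff_s7] at *; omega)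
  have hw2 : w.2 + y.2 = 2 * u.2 := by
    by_contra h
    exact htri w hw y hy huw huy (by rw [adj_iff_s7] at *; omega)
  have hm : (u.1, v.2) ∈ S := by
    have hw' : (w.1, v.2) ∈ S := by rwa [show v.2 = w.2 by omega]
    rw [adj_iff_s7] at huv huw
    exact (hrow v.2).out hv hw' ⟨by omega, by omega⟩
  exact htri v hv _ hm huv (by rw [adj_iff_s7] at *; dsimp only; omega)
    (by rw [adj_iff_s7] at *; dsimp only; omega)

theorem eq_of_mem_of_fst_eq (hrow : ∀ b, ((·, b) ⁻¹' S).OrdConnected)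
    (hcol : ∀ a, (Prod.mk a ⁻¹' S).OrdConnected) (htri : NoTriangleAt S u) (hu : u ∈ S)
    (hv : v ∈ S) (hw : w ∈ S) (huv : Supergrid.Adj u v) (huw : Supergrid.Adj u w)
    (hvw : v.1 + 2 = w.1) {x : ℤ × ℤ} (hx : x ∈ S) (hxu : x.1 = u.1) : x = u := by
  have hx' : (u.1, x.2) ∈ S := by rwa [← hxu]
  have hnot := fun y => notMem_of_adj_of_fst_eq hrow htri hv hw huv huw hvw (y := (u.1, y))
  rcases lt_trichotomy x.2 u.2 with h | h | h
  · exact absurd ((hcol u.1).out hx' hu ⟨by omega, by omega⟩)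
      (hnot (u.2 - 1) (by rw [adj_iff_s7]; dsimp only; omega) rfl)
  · exact Prod.ext hxu h
  · exact absurd ((hcol u.1).out hu hx' ⟨by omega, by omega⟩)
      (hnot (u.2 + 1) (by rw [adj_iff_s7]; dsimp only; omega) rfl)

theorem eq_of_mem_of_snd_eq (hrow : ∀ b, ((·, b) ⁻¹' S).OrdConnected)
    (hcol : ∀ a, (Prod.mk a ⁻¹' S).OrdConnected) (htri : NoTriangleAt S u) (hu : u ∈ S)
    (hv : v ∈ S) (hw : w ∈ S) (huv : Supergrid.Adj u v) (huw : Supergrid.Adj u w)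
    (hvw : v.2 + 2 = w.2) {x : ℤ × ℤ} (hx : x ∈ S) (hxu : x.2 = u.2) : x = u :=
  Prod.swap_injective <| eq_of_mem_of_fst_eq (S := Prod.swap ⁻¹' S) hcol hrow htri.swap hu hv hw
    (adj_swap.2 huv) (adj_swap.2 huw) hvw hx hxu

theorem not_preconnected_of_fst_add_two_eq (hrow : ∀ b, ((·, b) ⁻¹' S).OrdConnected)
    (hcol : ∀ a, (Prod.mk a ⁻¹' S).OrdConnected) (htri : NoTriangleAt S u) (hu : u ∈ S)
    (hv : v ∈ S) (hw : w ∈ S) (huv : Supergrid.Adj u v) (huw : Supergrid.Adj u w)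
    (hvw : v.1 + 2 = w.1) : ¬ (Supergrid.induce (S \ {u})).Preconnected := by
  intro hS
  have huv' := adj_iff_s7.1 huv
  have huw' := adj_iff_s7.1 huw
  obtain ⟨x, hx, hxu, hx1⟩ := exists_mem_ne_eq_of_preconnected Prod.fst
    (fun _ _ => fst_le_fst_add_one) hS ⟨hv, huv.ne'⟩ ⟨hw, huw.ne'⟩ (by omega) (by omega)
  exact hxu (eq_of_mem_of_fst_eq hrow hcol htri hu hv hw huv huw hvw hx hx1)

theorem not_preconnected_of_snd_add_two_eq (hrow : ∀ b, ((·, b) ⁻¹' S).OrdConnected)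
    (hcol : ∀ a, (Prod.mk a ⁻¹' S).OrdConnected) (htri : NoTriangleAt S u) (hu : u ∈ S)
    (hv : v ∈ S) (hw : w ∈ S) (huv : Supergrid.Adj u v) (huw : Supergrid.Adj u w)
    (hvw : v.2 + 2 = w.2) : ¬ (Supergrid.induce (S \ {u})).Preconnected := by
  intro hS
  have huv' := adj_iff_s7.1 huv
  have huw' := adj_iff_s7.1 huw
  obtain ⟨x, hx, hxu, hx2⟩ := exists_mem_ne_eq_of_preconnected Prod.snd
    (fun _ _ => snd_le_snd_add_one) hS ⟨hv, huv.ne'⟩ ⟨hw, huw.ne'⟩ (by omega) (by omega)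
  exact hxu (eq_of_mem_of_snd_eq hrow hcol htri hu hv hw huv huw hvw hx hx2)

end Supergrid

/-- In a 2-connected, linear-convex supergrid graph, every vertex has two neighbors
that are adjacent to each other, i.e. every vertex lies on a triangle. -/
theorem linearConvex_twoConnected_triangle (V : Finset (ℤ × ℤ))
    (hlc : LinearConvex (V : Set (ℤ × ℤ))) (h2c : TwoConnected V) :
    ∀ u : (V : Set (ℤ × ℤ)), ∃ v w : (V : Set (ℤ × ℤ)),
      (Supergrid.induce (V : Set (ℤ × ℤ))).Adj u v ∧
      (Supergrid.induce (V : Set (ℤ × ℤ))).Adj u w ∧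
      (Supergrid.induce (V : Set (ℤ × ℤ))).Adj v w := by
  rintro ⟨u, hu⟩
  obtain ⟨hcard, hconn, hconn_erase⟩ := h2c
  by_contra hno
  have htri : Supergrid.NoTriangleAt V u := fun a ha b hb hua hub hab =>
    hno ⟨⟨a, ha⟩, ⟨b, hb⟩, hua, hub, hab⟩
  obtain ⟨v, hv, huv⟩ := SimpleGraph.exists_adj_of_preconnected_induce hconn.preconnected
    (Finset.one_lt_card_iff_nontrivial.1 (by omega)) hu
  have hV_erase : ((V : Set (ℤ × ℤ)) \ {v}).Nontrivial := by
    rw [← Finset.coe_erase]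
    exact Finset.one_lt_card_iff_nontrivial.1 (by rw [Finset.card_erase_of_mem hv]; omega)
  obtain ⟨w, ⟨hw, hwv⟩, huw⟩ := SimpleGraph.exists_adj_of_preconnected_induce
    (hconn_erase v hv).preconnected hV_erase ⟨hu, huv.ne⟩
  have hsplit : v.1 + 2 = w.1 ∨ w.1 + 2 = v.1 ∨ v.2 + 2 = w.2 ∨ w.2 + 2 = v.2 := by
    have hvw := htri v hv w hw huv huw
    rw [Set.mem_singleton_iff, Prod.ext_iff] at hwv
    rw [Supergrid.adj_iff_s7] at huv huw hvw
    omega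
  have hdel := (hconn_erase u hu).preconnected
  have hrow := hlc.ordConnected_row
  have hcol := hlc.ordConnected_column
  rcases hsplit with h | h | h | h
  · exact Supergrid.not_preconnected_of_fst_add_two_eq hrow hcol htri hu hv hw huv huw h hdel
  · exact Supergrid.not_preconnected_of_fst_add_two_eq hrow hcol htri hu hw hv huw huv h hdel
  · exact Supergrid.not_preconnected_of_snd_add_two_eq hrow hcol htri hu hv hw huv huw h hdel
  · exact Supergrid.not_preconnected_of_snd_add_two_eq hrow hcol htri hu hw hv huw huv h hdel
end
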